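/- arXiv:1806.01433 — 6 statements merged into one kernel-verified Lean document; each statement's English description precedes it below -/
import Mathlib

section
/- Let G be a bipartite graph with girth g and let W be a closed walk with cycle of length i ≤ 2g−2 in G. Then there is an edge e of G that is traversed at two consecutive positions of W (cyclically); that is, W can be written as W' e e W'', or e e W', or W' e e, or e W' e for suitable subwalks W', W''. -/
/-!
If no edge is traversed twice in a row, cyclically, then the edge list of `w` concatenated with
itself has no two equal neighbours. A closed walk with this property that is not a cycle repeats a
vertex, so it splits into two shorter closed walks, each of which again never backtracks (the second
one wraps around the end of `w`). A non-backtracking closed walk contains a cycle and so has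
length at least the girth; hence `w` has length at least `2g > 2g - 2`.
-/

open SimpleGraph

def cycleFree {V : Type*} {G : SimpleGraph V} {u v : V} (w : G.Walk u v) : Prop :=
  (SimpleGraph.fromEdgeSet {e | e ∈ w.edges}).IsAcyclic

def isCWWC {V : Type*} {G : SimpleGraph V} {u : V} (w : G.Walk u u) : Prop :=
  ¬ w.IsCycle ∧ ¬ cycleFree w

theorem List.isChain_ne_append_self {α : Type*} {l : List α}
    (h : ∀ i j (hi : i < l.length) (hj : j < l.length), j = (i + 1) % l.length → l[i] ≠ l[j]) :
    (l ++ l).IsChain (· ≠ ·) := by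
  have hchain : l.IsChain (· ≠ ·) := List.isChain_iff_getElem.mpr fun i hi =>
    h i (i + 1) (by omega) hi (Nat.mod_eq_of_lt hi).symm
  refine List.isChain_append.mpr ⟨hchain, hchain, fun x hx y hy => ?_⟩
  obtain ⟨hlast, rfl⟩ := List.getElem?_eq_some_iff.mp (List.getLast?_eq_getElem? ▸ hx)
  obtain ⟨hhead, rfl⟩ := List.getElem?_eq_some_iff.mp (List.head?_eq_getElem? ▸ hy)
  exact h _ 0 hlast hhead (by rw [Nat.sub_add_cancel hhead, Nat.mod_self])

namespace SimpleGraph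
variable {V : Type*} {G : SimpleGraph V}
namespace Walk

lemma isCycle_cons_of_support_nodup {x y : V} (h : G.Adj y x) (r : G.Walk x y)
    (hnd : r.support.Nodup) (hch : (cons h r).edges.IsChain (· ≠ ·)) :
    (cons h r).IsCycle := by
  rw [cons_isCycle_iff]
  refine ⟨IsPath.mk' hnd, fun he => ?_⟩
  cases r with
  | nil => exact G.loopless.irrefl _ h
  | cons h' r' =>
    rcases List.mem_cons.mp he with he | he
    · exact (List.isChain_cons_cons.mp hch).1 he
    · exact ((cons_isPath_iff _ _).mp (IsPath.mk' hnd)).2 (snd_mem_support_of_mem_edges r' he)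

lemma exists_eq_append_append_of_not_nodup_support {a b : V} (p : G.Walk a b)
    (hnd : ¬ p.support.Nodup) :
    ∃ (z : V) (p₁ : G.Walk a z) (d : G.Walk z z) (p₂ : G.Walk z b),
      p = p₁.append (d.append p₂) ∧ ¬ d.Nil := by
  classical
  induction p with
  | nil => simp at hnd
  | @cons u c b h q ih =>
    by_cases hu : u ∈ q.support
    · refine ⟨u, nil, cons h (q.takeUntil u hu), q.dropUntil u hu, ?_, not_nil_cons⟩
      rw [nil_append, cons_append, take_spec]
    · obtain ⟨z, q₁, d, q₂, rfl, hd⟩ := ih fun hq => hnd (by simpa [hu] using hq)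
      exact ⟨z, cons h q₁, d, q₂, by rw [cons_append], hd⟩

end Walk

open Walk

lemma girth_le_length_of_isChain_ne {x : V} :
    ∀ c : G.Walk x x, ¬ c.Nil → c.edges.IsChain (· ≠ ·) → G.girth ≤ c.length
  | nil, hc, _ => absurd nil_nil hc
  | cons h r, _, hch => by
    by_cases hnd : r.support.Nodup
    · exact girth_le_length (isCycle_cons_of_support_nodup h r hnd hch)
    · obtain ⟨z, r₁, d, r₂, hr, hd⟩ := r.exists_eq_append_append_of_not_nodup_support hnd
      subst hr
      have := girth_le_length_of_isChain_ne d hd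
        (hch.infix ⟨(cons h r₁).edges, r₂.edges, by simp [edges_append]⟩)
      simp only [length_cons, length_append]
      omega
termination_by c => c.length
decreasing_by subst hr; simp only [length_cons, length_append]; omega

lemma two_mul_girth_le_length {u : V} (c : G.Walk u u) (hc : ¬ c.Nil) (hcyc : ¬ c.IsCycle)
    (hch : (c.edges ++ c.edges).IsChain (· ≠ ·)) : 2 * G.girth ≤ c.length := by
  cases c with
  | nil => exact absurd nil_nil hc
  | cons h r =>
    have hnd : ¬ r.support.Nodup := fun hnd =>
      hcyc (isCycle_cons_of_support_nodup h r hnd (hch.prefix (List.prefix_append _ _)))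
    obtain ⟨z, r₁, d, r₂, rfl, hd⟩ := r.exists_eq_append_append_of_not_nodup_support hnd
    have hgd := girth_le_length_of_isChain_ne d hd (hch.infix
      ⟨(cons h r₁).edges, r₂.edges ++ (cons h (r₁.append (d.append r₂))).edges,
        by simp [edges_append]⟩)
    have hgB := girth_le_length_of_isChain_ne (r₂.append (cons h r₁)) (by simp) (hch.infix
      ⟨(cons h r₁).edges ++ d.edges, d.edges ++ r₂.edges, by simp [edges_append]⟩)
    simp only [length_cons, length_append] at hgd hgB ⊢
    omega

end SimpleGraph

lemma isCWWC.not_nil {V : Type*} {G : SimpleGraph V} {u : V} {w : G.Walk u u} (hw : isCWWC w) :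
    ¬ w.Nil := by
  cases w with
  | nil => exact absurd (by simp [cycleFree]) hw.2
  | cons => exact Walk.not_nil_cons

theorem stmt1_general {V : Type*} (G : SimpleGraph V)
    (g : ℕ) (hg : G.girth = g)
    (v : V) (w : G.Walk v v) (hW : isCWWC w) (hlen : w.length ≤ 2 * g - 2) :
    ∃ i j : ℕ, ∃ (h1 : i < w.edges.length) (h2 : j < w.edges.length),
      j = (i + 1) % w.edges.length ∧ w.edges[i]'h1 = w.edges[j]'h2 := by
  by_contra hcon
  push Not at hcon
  have := G.two_mul_girth_le_length w hW.not_nil hW.1 (List.isChain_ne_append_self hcon)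
  have := w.not_nil_iff_lt_length.mp hW.not_nil
  omega

/-- In a bipartite graph of girth `g`, every closed walk with cycle of length at most
`2g - 2` traverses some edge at two (cyclically) consecutive positions. -/
theorem stmt1 {V : Type*} (G : SimpleGraph V) (U : Set V)
    (hbip : ∀ a b : V, G.Adj a b → (a ∈ U ↔ b ∉ U))
    (g : ℕ) (hg : G.girth = g)
    (v : V) (w : G.Walk v v) (hW : isCWWC w) (hlen : w.length ≤ 2 * g - 2) :
    ∃ i j : ℕ, ∃ (h1 : i < w.edges.length) (h2 : j < w.edges.length),
      j = (i + 1) % w.edges.length ∧ w.edges[i]'h1 = w.edges[j]'h2 :=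
  stmt1_general G g hg v w hW hlen
end

section
/- Let G be a bipartite graph with girth g. If W is a closed walk with cycle of length i ≤ 2g−2, then W consists of exactly one cycle ζ together with some closed cycle-free walks attached at nodes of ζ; in particular, the edge set of W contains the edge set of a unique cycle. -/
open SimpleGraph

/-!
Let `O` be the set of edges that the closed walk `w` traverses an odd number of times and `F` the
rest of its edges, so that `#O + 2 * #F ≤ length w ≤ 2g - 2`. Every vertex lies on an even number of
edges of `O`, and a nonempty edge set with all degrees even contains a cycle, hence has at least
`g` edges. For a cycle `C` inside `w`, the symmetric difference `C ∆ O` also has even degrees but at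
most `g - 2` edges, so it is empty: every cycle inside `w` has edge set `O`. Finally
`#F ≤ (g - 2) / 2 < g`, so `F` contains no cycle.
-/

open Finset
open scoped symmDiff

theorem Finset.card_symmDiff_add_two_mul_card_inter {α : Type*} [DecidableEq α]
    (s t : Finset α) : #(s ∆ t) + 2 * #(s ∩ t) = #s + #t := by
  rw [symmDiff_eq_sup_sdiff_inf, sup_eq_union, inf_eq_inter,
    card_sdiff_of_subset inter_subset_union, ← card_union_add_card_inter s t]
  have := card_le_card (inter_subset_union (s := s) (t := t))
  omega

namespace SimpleGraph

variable {V : Type*} {G H : SimpleGraph V}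

theorem not_isAcyclic_of_forall_adj_exists_adj_ne [Finite H.edgeSet] {a b : V} (hab : H.Adj a b)
    (h : ∀ ⦃x y⦄, H.Adj x y → ∃ z ≠ y, H.Adj x z) : ¬ H.IsAcyclic := by
  intro hH
  have : Nonempty V := ⟨a⟩
  obtain ⟨x, y, p, hp, hmax⟩ := Walk.exists_isPath_forall_isPath_length_le_length H
  have hnil : ¬ p.Nil := by
    rw [Walk.not_nil_iff_lt_length]
    exact hmax a b (.cons hab .nil) (by simp [hab.ne])
  obtain ⟨z, hz, hxz⟩ := h (p.adj_snd hnil)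
  have hzp : z ∉ p.support := fun hz' => hz (hH.eq_snd_of_adj_start hp hxz hz')
  simpa using hmax z y (.cons hxz.symm p) (hp.cons hzp)

theorem exists_isCycle_of_not_isAcyclic_fromEdgeSet {S : Set (Sym2 V)} (hS : S ⊆ G.edgeSet)
    (h : ¬ (fromEdgeSet S).IsAcyclic) :
    ∃ (u : V) (c : G.Walk u u), c.IsCycle ∧ ∀ e ∈ c.edges, e ∈ S := by
  simp only [IsAcyclic, not_forall, not_not] at h
  obtain ⟨u, c, hc⟩ := h
  have hle : fromEdgeSet S ≤ G := (fromEdgeSet_le G).2 (Set.sdiff_subset.trans hS)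
  refine ⟨u, c.mapLe hle, hc.mapLe hle, fun e he => ?_⟩
  rw [Walk.edges_mapLe_eq_edges] at he
  exact ((edgeSet_fromEdgeSet S ▸ c.edges_subset_edgeSet he) : e ∈ S \ _).1

theorem Walk.IsCycle.girth_le_card {u : V} {c : G.Walk u u} (hc : c.IsCycle) {T : Finset (Sym2 V)}
    (hcT : ∀ e ∈ c.edges, e ∈ T) : G.girth ≤ #T := by
  classical
  calc G.girth ≤ c.length := girth_le_length hc
    _ = #c.edges.toFinset := by
      rw [List.toFinset_card_of_nodup hc.edges_nodup, Walk.length_edges]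
    _ ≤ #T := card_le_card fun e he => hcT e (List.mem_toFinset.1 he)

variable [DecidableEq V]

def EvenDegree (T : Finset (Sym2 V)) : Prop :=
  ∀ x : V, Even #{e ∈ T | x ∈ e}

theorem EvenDegree.symmDiff {S T : Finset (Sym2 V)} (hS : EvenDegree S) (hT : EvenDegree T) :
    EvenDegree (S ∆ T) := by
  intro x
  have hfilter : {e ∈ S ∆ T | x ∈ e} = {e ∈ S | x ∈ e} ∆ {e ∈ T | x ∈ e} := by
    ext e
    simp only [mem_filter, mem_symmDiff]
    tauto
  have := (hS x).add (hT x)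
  rw [← card_symmDiff_add_two_mul_card_inter, Nat.even_add, ← hfilter] at this
  exact this.2 (even_two_mul _)

theorem exists_isCycle_of_evenDegree {T : Finset (Sym2 V)} (hT : ↑T ⊆ G.edgeSet)
    (hne : T.Nonempty) (hdeg : EvenDegree T) :
    ∃ (u : V) (c : G.Walk u u), c.IsCycle ∧ ∀ e ∈ c.edges, e ∈ T := by
  apply exists_isCycle_of_not_isAcyclic_fromEdgeSet hT
  have hadj : ∀ ⦃x y⦄, s(x, y) ∈ T → (fromEdgeSet (T : Set (Sym2 V))).Adj x y :=
    fun x y h => (fromEdgeSet_adj _).2 ⟨h, (G.mem_edgeSet.1 (hT h)).ne⟩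
  have : Finite (fromEdgeSet (T : Set (Sym2 V))).edgeSet := by
    rw [edgeSet_fromEdgeSet]
    exact (T.finite_toSet.sdiff).to_subtype
  obtain ⟨e, he⟩ := hne
  induction e using Sym2.ind with | _ a b => ?_
  refine not_isAcyclic_of_forall_adj_exists_adj_ne (hadj he) fun x y hxy => ?_
  have hmem : s(x, y) ∈ {e ∈ T | x ∈ e} :=
    mem_filter.2 ⟨((fromEdgeSet_adj _).1 hxy).1, Sym2.mem_mk_left x y⟩
  have htwo : 1 < #{e ∈ T | x ∈ e} := by
    obtain ⟨k, hk⟩ := hdeg x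
    have := card_pos.2 ⟨_, hmem⟩
    omega
  obtain ⟨e, he, hexy⟩ := exists_mem_ne htwo s(x, y)
  obtain ⟨heT, hxe⟩ := mem_filter.1 he
  obtain ⟨z, rfl⟩ := Sym2.mem_iff_exists.1 hxe
  exact ⟨z, fun hzy => hexy (hzy ▸ rfl), hadj heT⟩

namespace Walk

variable {u v : V}

theorem even_countP_edges_iff (p : G.Walk u v) (x : V) :
    Even (p.edges.countP fun e => x ∈ e) ↔ u ≠ v → x ≠ u ∧ x ≠ v := by
  induction p with
  | nil => simp
  | cons hab p ih =>
    have := hab.ne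
    simp only [edges_cons, List.countP_cons, Sym2.mem_iff, decide_eq_true_eq]
    split_ifs <;> grind [Nat.even_add_one]

def oddEdges (p : G.Walk u v) : Finset (Sym2 V) :=
  {e ∈ p.edges.toFinset | Odd (p.edges.count e)}

def evenEdges (p : G.Walk u v) : Finset (Sym2 V) :=
  p.edges.toFinset \ p.oddEdges

theorem evenDegree_oddEdges (p : G.Walk u u) : EvenDegree p.oddEdges := by
  intro x
  have := (p.even_countP_edges_iff x).2 (absurd rfl)
  rw [← sum_filter_count_eq_countP, even_sum_iff_even_card_odd, filter_filter] at this
  rwa [oddEdges, filter_filter, ← filter_congr fun e _ => and_comm]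

theorem IsTrail.oddEdges_eq {p : G.Walk u v} (hp : p.IsTrail) : p.oddEdges = p.edges.toFinset :=
  filter_true_of_mem fun _ he => by
    rw [hp.count_edges_eq_one (List.mem_toFinset.1 he)]
    exact odd_one

theorem card_oddEdges_add_two_mul_card_evenEdges_le (p : G.Walk u v) :
    #p.oddEdges + 2 * #p.evenEdges ≤ p.length := by
  have hsub : p.oddEdges ⊆ p.edges.toFinset := filter_subset _ _
  calc #p.oddEdges + 2 * #p.evenEdges = ∑ _ ∈ p.oddEdges, 1 + ∑ _ ∈ p.evenEdges, 2 := by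
        simp [mul_comm]
    _ ≤ ∑ e ∈ p.oddEdges, p.edges.count e + ∑ e ∈ p.evenEdges, p.edges.count e := by
        gcongr with e he e he
        · exact List.count_pos_iff.2 (List.mem_toFinset.1 (hsub he))
        · obtain ⟨he, hodd⟩ := mem_sdiff.1 he
          have hpos := List.count_pos_iff.2 (List.mem_toFinset.1 he)
          have heven : Even (p.edges.count e) := by
            simpa [oddEdges, he] using hodd
          obtain ⟨k, hk⟩ := heven
          omega
    _ = p.length := by
        rw [add_comm, evenEdges, sum_sdiff hsub, List.sum_toFinset_count_eq_length, length_edges]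

theorem IsCycle.edges_toFinset_eq_oddEdges {w : G.Walk v v} (hlen : w.length + 2 ≤ 2 * G.girth)
    {c : G.Walk u u} (hc : c.IsCycle) (hcw : c.edges ⊆ w.edges) :
    c.edges.toFinset = w.oddEdges := by
  set C := c.edges.toFinset
  set O := w.oddEdges
  by_contra hCO
  have hCw : C ⊆ w.edges.toFinset := fun e he => List.mem_toFinset.2 (hcw (List.mem_toFinset.1 he))
  have hG : ↑(C ∆ O) ⊆ G.edgeSet := fun e he => by
    have he' : e ∈ w.edges.toFinset := (mem_symmDiff.1 he).elim (hCw ·.1) (filter_subset _ _ ·.1)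
    exact w.edges_subset_edgeSet (List.mem_toFinset.1 he')
  have hne : (C ∆ O).Nonempty := nonempty_iff_ne_empty.2 (symmDiff_eq_bot.not.2 hCO)
  have hdeg : EvenDegree (C ∆ O) :=
    (hc.isTrail.oddEdges_eq ▸ c.evenDegree_oddEdges).symmDiff w.evenDegree_oddEdges
  obtain ⟨_, d, hd, hdCO⟩ := exists_isCycle_of_evenDegree hG hne hdeg
  have hgirth_CO := hd.girth_le_card hdCO
  have hgirth_C := hc.girth_le_card (T := C) fun _ => List.mem_toFinset.2
  have hsymmDiff := card_symmDiff_add_two_mul_card_inter C O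
  have hsdiff := card_sdiff_add_card_inter C O
  have hsdiff_le : #(C \ O) ≤ #w.evenEdges := card_le_card (sdiff_subset_sdiff hCw le_rfl)
  have hcount : #O + 2 * #w.evenEdges ≤ w.length := w.card_oddEdges_add_two_mul_card_evenEdges_le
  have hpos := hne.card_pos
  -- `#(C ∆ O) = #O - #C + 2 * #(C \ O) ≤ #O + 2 * #w.evenEdges - g ≤ g - 2`
  omega

theorem isAcyclic_fromEdgeSet_evenEdges {w : G.Walk v v} (hlen : w.length + 2 ≤ 2 * G.girth)
    {c : G.Walk u u} (hc : c.IsCycle) (hcw : c.edges ⊆ w.edges) :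
    (fromEdgeSet (w.evenEdges : Set (Sym2 V))).IsAcyclic := by
  by_contra hF
  have hG : ↑w.evenEdges ⊆ G.edgeSet := fun e he =>
    w.edges_subset_edgeSet (List.mem_toFinset.1 (sdiff_subset he))
  obtain ⟨_, d, hd, hdF⟩ := exists_isCycle_of_not_isAcyclic_fromEdgeSet hG hF
  have hgirth_F := hd.girth_le_card hdF
  have hgirth_O := hc.girth_le_card (T := w.oddEdges) fun _ he =>
    hc.edges_toFinset_eq_oddEdges hlen hcw ▸ List.mem_toFinset.2 he
  have hcount := w.card_oddEdges_add_two_mul_card_evenEdges_le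
  omega

end Walk

end SimpleGraph

theorem stmt3_general {V : Type*} [DecidableEq V] (G : SimpleGraph V)
    (g : ℕ) (hg : G.girth = g)
    (v : V) (w : G.Walk v v) (hW : isCWWC w) (hlen : w.length ≤ 2 * g - 2) :
    (∃! s : Set (Sym2 V),
      (∃ (u : V) (c : G.Walk u u), c.IsCycle ∧ {e | e ∈ c.edges} = s) ∧
      s ⊆ {e | e ∈ w.edges}) ∧
    (∀ s : Set (Sym2 V),
      (∃ (u : V) (c : G.Walk u u), c.IsCycle ∧ {e | e ∈ c.edges} = s) →
      s ⊆ {e | e ∈ w.edges} →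
      (∀ e ∈ w.edges, e ∉ s → 2 ∣ w.edges.count e) ∧
      (SimpleGraph.fromEdgeSet {e | e ∈ w.edges ∧ e ∉ s}).IsAcyclic) := by
  subst hg
  obtain ⟨u, γ, hγ, hγw⟩ :=
    exists_isCycle_of_not_isAcyclic_fromEdgeSet (fun _ he => w.edges_subset_edgeSet he) hW.2
  have hlen' : w.length + 2 ≤ 2 * G.girth := by
    have := three_le_girth fun h => h γ hγ
    omega
  have hunique : ∀ s, (∃ (u : V) (c : G.Walk u u), c.IsCycle ∧ {e | e ∈ c.edges} = s) →
      s ⊆ {e | e ∈ w.edges} → s = ↑w.oddEdges := by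
    rintro _ ⟨u, c, hc, rfl⟩ hcw
    ext e
    simp [← hc.edges_toFinset_eq_oddEdges hlen' hcw]
  have hγs := hunique _ ⟨u, γ, hγ, rfl⟩ hγw
  refine ⟨⟨_, ⟨⟨u, γ, hγ, rfl⟩, hγw⟩, fun s ⟨hs, hsw⟩ => (hunique s hs hsw).trans hγs.symm⟩,
    fun s hs hsw => ?_⟩
  obtain rfl := hunique s hs hsw
  refine ⟨fun e he heO => ?_, ?_⟩
  · simpa [Walk.oddEdges, he, even_iff_two_dvd] using heO
  · have hF : {e | e ∈ w.edges ∧ e ∉ (w.oddEdges : Set (Sym2 V))} = w.evenEdges := by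
      ext
      simp [Walk.evenEdges]
    rw [hF]
    exact Walk.isAcyclic_fromEdgeSet_evenEdges hlen' hγ hγw

/-- In a bipartite graph of girth `g`, a closed walk with cycle of length at most
`2g - 2` consists of exactly one cycle `ζ` together with closed cycle-free parts:
its edge set contains the edge set of a unique cycle, and moreover every edge outside
that cycle is traversed an even number of times and the edges outside the cycle form
an acyclic subgraph. -/
theorem stmt3 {V : Type*} [DecidableEq V] (G : SimpleGraph V) (U : Set V)
    (hbip : ∀ a b : V, G.Adj a b → (a ∈ U ↔ b ∉ U))
    (g : ℕ) (hg : G.girth = g)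
    (v : V) (w : G.Walk v v) (hW : isCWWC w) (hlen : w.length ≤ 2 * g - 2) :
    (∃! s : Set (Sym2 V),
      (∃ (u : V) (c : G.Walk u u), c.IsCycle ∧ {e | e ∈ c.edges} = s) ∧
      s ⊆ {e | e ∈ w.edges}) ∧
    (∀ s : Set (Sym2 V),
      (∃ (u : V) (c : G.Walk u u), c.IsCycle ∧ {e | e ∈ c.edges} = s) →
      s ⊆ {e | e ∈ w.edges} →
      (∀ e ∈ w.edges, e ∉ s → 2 ∣ w.edges.count e) ∧
      (SimpleGraph.fromEdgeSet {e | e ∈ w.edges ∧ e ∉ s}).IsAcyclic) :=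
  stmt3_general G g hg v w hW hlen
end

section
/- Let G be a bipartite graph with girth g. If W is a closed walk with cycle of length i ≤ 2g−2, then the edge-induced subgraph on the edge set of W contains exactly one cycle. -/
open SimpleGraph

/-!
Let `O` be the set of edges that the closed walk `w` traverses an odd number of times. Both `O`
and the edge set `S` of a cycle meet every vertex in an even number of edges, and so does `O ∆ S`.
A nonempty edge set with this property contains a cycle, so if `S ≠ O` then
`girth ≤ #(O ∆ S)`, while also `girth ≤ #S`. If `S` lies in `w`, each edge of `O ∆ S` is walked
at least once and each edge of `S \ O` at least twice, whence `#(O ∆ S) + #S ≤ length w`.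
This contradicts `length w ≤ 2 * girth - 2`, so every cycle inside `w` has edge set `O`.
-/

open Finset
open scoped symmDiff

theorem Finset.even_card_symmDiff_iff {α : Type*} [DecidableEq α] (s t : Finset α) :
    Even #(s ∆ t) ↔ (Even #s ↔ Even #t) := by
  have hsplit : #(s ∆ t) + 2 * #(s ∩ t) = #s + #t := by
    rw [symmDiff_eq_sup_sdiff_inf, sup_eq_union, inf_eq_inter,
      card_sdiff_of_subset inter_subset_union, ← card_union_add_card_inter s t]
    have := card_le_card (inter_subset_union (s := s) (t := t))
    omega
  constructor <;> intro h <;> grind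

namespace List

variable {α : Type*} [DecidableEq α]

def oddCountFinset (l : List α) : Finset α :=
  {a ∈ l.toFinset | Odd (l.count a)}

theorem even_countP_iff_even_card_filter_oddCountFinset (l : List α) (p : α → Prop)
    [DecidablePred p] :
    Even (l.countP (p ·)) ↔ Even #{a ∈ l.oddCountFinset | p a} := by
  rw [countP_eq_length_filter, ← sum_toFinset_count_eq_length, even_sum_iff_even_card_odd]
  congr! 2
  ext a
  by_cases ha : p a <;> simp [oddCountFinset, count_filter, ha, and_comm]

theorem oddCountFinset_eq_toFinset {l : List α} (hl : l.Nodup) : l.oddCountFinset = l.toFinset :=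
  filter_true_of_mem fun a ha => by simp [count_eq_one_of_mem hl (mem_toFinset.1 ha)]

theorem card_symmDiff_oddCountFinset_add_card_le_length {l : List α} {S : Finset α}
    (hS : S ⊆ l.toFinset) : #(l.oddCountFinset ∆ S) + #S ≤ l.length := by
  have hO : l.oddCountFinset ⊆ l.toFinset := Finset.filter_subset _ _
  have hOS : l.oddCountFinset ∆ S ⊆ l.toFinset := symmDiff_le_sup.trans (union_subset hO hS)
  rw [← sum_toFinset_count_eq_length, ← inter_eq_right.2 hOS, ← inter_eq_right.2 hS,
    ← filter_mem_eq_inter, ← filter_mem_eq_inter, card_filter, card_filter, ← sum_add_distrib]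
  refine sum_le_sum fun a ha => ?_
  have hmem : a ∈ l := mem_toFinset.1 ha
  have hpos : 0 < l.count a := count_pos_iff.2 hmem
  rcases Nat.even_or_odd (l.count a) with hev | hodd
  · have hnodd : ¬Odd (l.count a) := Nat.not_odd_iff_even.2 hev
    by_cases haS : a ∈ S <;> simp [oddCountFinset, mem_symmDiff, haS, hnodd, hmem]
    obtain ⟨k, hk⟩ := hev
    omega
  · by_cases haS : a ∈ S <;> simp [oddCountFinset, mem_symmDiff, haS, hodd, hmem]

end List

namespace SimpleGraph

variable {V : Type*} {G : SimpleGraph V}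

theorem Walk.even_countP_edges_iff_s4 [DecidableEq V] {u v : V} (p : G.Walk u v) (x : V) :
    Even (p.edges.countP (x ∈ ·)) ↔ (x = u ↔ x = v) := by
  induction p with
  | nil => simp
  | @cons u b v h q ih =>
    have hub : u ≠ b := h.ne
    simp only [edges_cons, List.countP_cons, Sym2.mem_iff, decide_eq_true_eq]
    by_cases hxu : x = u <;> by_cases hxb : x = b <;> simp_all [Nat.even_add_one]

theorem Walk.IsTrail.length_le_card {u v : V} {p : G.Walk u v} (hp : p.IsTrail)
    {E : Finset (Sym2 V)} (hpE : ∀ e ∈ p.edges, e ∈ E) : p.length ≤ #E := by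
  classical
  rw [← length_edges, ← List.toFinset_card_of_nodup hp.edges_nodup]
  exact card_le_card fun e he => hpE e (List.mem_toFinset.1 he)

def IsEvenEdgeSet [DecidableEq V] (E : Finset (Sym2 V)) : Prop :=
  ∀ x : V, Even #{e ∈ E | x ∈ e}

section IsEvenEdgeSet

variable [DecidableEq V]

theorem Walk.isEvenEdgeSet_oddCountFinset_edges {u : V} (w : G.Walk u u) :
    IsEvenEdgeSet w.edges.oddCountFinset := fun x =>
  (w.edges.even_countP_iff_even_card_filter_oddCountFinset (x ∈ ·)).1
    ((w.even_countP_edges_iff_s4 x).2 Iff.rfl)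

theorem Walk.IsCycle.isEvenEdgeSet_edges_toFinset {u : V} {c : G.Walk u u} (hc : c.IsCycle) :
    IsEvenEdgeSet c.edges.toFinset :=
  List.oddCountFinset_eq_toFinset hc.edges_nodup ▸ c.isEvenEdgeSet_oddCountFinset_edges

theorem IsEvenEdgeSet.symmDiff {A B : Finset (Sym2 V)} (hA : IsEvenEdgeSet A)
    (hB : IsEvenEdgeSet B) : IsEvenEdgeSet (A ∆ B) := by
  intro x
  have hfilter : {e ∈ A ∆ B | x ∈ e} = {e ∈ A | x ∈ e} ∆ {e ∈ B | x ∈ e} := by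
    ext e
    simp only [mem_filter, mem_symmDiff]
    tauto
  rw [hfilter, even_card_symmDiff_iff]
  exact iff_of_true (hA x) (hB x)

theorem IsEvenEdgeSet.exists_ne_of_mem {E : Finset (Sym2 V)} (hE : IsEvenEdgeSet E) {x b : V}
    (hxb : s(x, b) ∈ E) : ∃ c, s(x, c) ∈ E ∧ c ≠ b := by
  have hpos : 0 < #{e ∈ E | x ∈ e} :=
    card_pos.2 ⟨s(x, b), mem_filter.2 ⟨hxb, Sym2.mem_mk_left x b⟩⟩
  have htwo : 1 < #{e ∈ E | x ∈ e} := by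
    obtain ⟨k, hk⟩ := hE x
    omega
  obtain ⟨e, he, hne⟩ := exists_mem_ne htwo s(x, b)
  obtain ⟨heE, hxe⟩ := mem_filter.1 he
  obtain ⟨c, rfl⟩ := Sym2.mem_iff_exists.1 hxe
  exact ⟨c, heE, fun hcb => hne (hcb ▸ rfl)⟩

/-- Every vertex of `E` has a second edge, so in an acyclic graph every path could be extended
at its start, giving paths longer than `#E`. -/
theorem IsEvenEdgeSet.not_isAcyclic_fromEdgeSet {E : Finset (Sym2 V)} (hE : IsEvenEdgeSet E)
    (hne : E.Nonempty) (hdiag : ∀ e ∈ E, ¬e.IsDiag) :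
    ¬(fromEdgeSet (E : Set (Sym2 V))).IsAcyclic := by
  intro hacyc
  have hadj {x y : V} (hxy : s(x, y) ∈ E) : (fromEdgeSet (E : Set (Sym2 V))).Adj x y :=
    (fromEdgeSet_adj _).2 ⟨hxy, fun h => hdiag _ hxy (Sym2.mk_isDiag_iff.2 h)⟩
  have hlong (n : ℕ) : ∃ (x y : V) (p : (fromEdgeSet (E : Set (Sym2 V))).Walk x y),
      p.IsPath ∧ p.length = n + 1 := by
    induction n with
    | zero =>
      obtain ⟨e, he⟩ := hne
      induction e using Sym2.ind with
      | h x y => exact ⟨x, y, (hadj he).toWalk, Walk.IsPath.of_adj (hadj he), rfl⟩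
    | succ n ih =>
      obtain ⟨x, y, p, hp, hlen⟩ := ih
      cases p with
      | nil => simp at hlen
      | @cons x b y hxb q =>
        obtain ⟨c, hxc, hcb⟩ := hE.exists_ne_of_mem ((fromEdgeSet_adj _).1 hxb).1
        have hc : c ∉ (Walk.cons hxb q).support := fun hc =>
          hcb (by simpa using hacyc.eq_snd_of_adj_start hp (hadj hxc) hc)
        exact ⟨c, y, .cons (hadj hxc).symm (.cons hxb q), hp.cons hc, by simp [hlen]⟩
  obtain ⟨x, y, p, hp, hlen⟩ := hlong #E
  have := hp.isTrail.length_le_card fun e he =>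
    (edgeSet_fromEdgeSet (E : Set (Sym2 V)) ▸ p.edges_subset_edgeSet he).1
  omega

theorem IsEvenEdgeSet.girth_le_card {E : Finset (Sym2 V)} (hE : IsEvenEdgeSet E)
    (hne : E.Nonempty) (hEG : ∀ e ∈ E, e ∈ G.edgeSet) : G.girth ≤ #E := by
  have hHG : fromEdgeSet (E : Set (Sym2 V)) ≤ G :=
    (fromEdgeSet_le _).2 fun e he => hEG e he.1
  have hH := hE.not_isAcyclic_fromEdgeSet hne fun e he => G.not_isDiag_of_mem_edgeSet (hEG e he)
  obtain ⟨u, c, hc, hgirth⟩ := exists_girth_eq_length.2 hH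
  calc G.girth ≤ (fromEdgeSet (E : Set (Sym2 V))).girth := girth_anti hHG hH
    _ = c.length := hgirth
    _ ≤ #E := hc.isTrail.length_le_card fun e he =>
      (edgeSet_fromEdgeSet (E : Set (Sym2 V)) ▸ c.edges_subset_edgeSet he).1

theorem Walk.IsCycle.edges_toFinset_eq_oddCountFinset {u v : V} {c : G.Walk u u}
    {w : G.Walk v v} (hc : c.IsCycle) (hcw : ∀ e ∈ c.edges, e ∈ w.edges)
    (hlen : w.length ≤ 2 * G.girth - 2) : c.edges.toFinset = w.edges.oddCountFinset := by
  by_contra hne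
  have hS : c.edges.toFinset ⊆ w.edges.toFinset := fun e he =>
    List.mem_toFinset.2 (hcw e (List.mem_toFinset.1 he))
  have hgS : G.girth ≤ #c.edges.toFinset := by
    rw [List.toFinset_card_of_nodup hc.edges_nodup, length_edges]
    exact girth_le_length hc
  have hgE : G.girth ≤ #(w.edges.oddCountFinset ∆ c.edges.toFinset) :=
    (w.isEvenEdgeSet_oddCountFinset_edges.symmDiff hc.isEvenEdgeSet_edges_toFinset).girth_le_card
      (symmDiff_nonempty.2 (Ne.symm hne)) fun e he => w.edges_subset_edgeSet <|
        List.mem_toFinset.1 <| symmDiff_le_sup.trans (union_subset (filter_subset _ _) hS) he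
  have hg3 : 3 ≤ G.girth := three_le_girth fun hacyc => hacyc c hc
  have := List.card_symmDiff_oddCountFinset_add_card_le_length hS
  rw [length_edges] at this
  omega

end IsEvenEdgeSet

end SimpleGraph

theorem exists_isCycle_of_not_cycleFree {V : Type*} {G : SimpleGraph V} {u v : V}
    {w : G.Walk u v} (hw : ¬cycleFree w) :
    ∃ (x : V) (c : G.Walk x x), c.IsCycle ∧ ∀ e ∈ c.edges, e ∈ w.edges := by
  obtain ⟨x, c, hc⟩ : ∃ (x : V) (c : (fromEdgeSet {e | e ∈ w.edges}).Walk x x), c.IsCycle := by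
    simpa [cycleFree, IsAcyclic] using hw
  have hle : fromEdgeSet {e | e ∈ w.edges} ≤ G :=
    (fromEdgeSet_le _).2 fun e he => w.edges_subset_edgeSet he.1
  refine ⟨x, c.mapLe hle, hc.mapLe hle, fun e he => ?_⟩
  rw [Walk.edges_mapLe_eq_edges] at he
  exact (edgeSet_fromEdgeSet _ ▸ c.edges_subset_edgeSet he).1

theorem stmt4_general {V : Type*} (G : SimpleGraph V)
    (g : ℕ) (hg : G.girth = g)
    (v : V) (w : G.Walk v v) (hW : isCWWC w) (hlen : w.length ≤ 2 * g - 2) :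
    ∃! s : Set (Sym2 V),
      (∃ (u : V) (c : G.Walk u u), c.IsCycle ∧ {e | e ∈ c.edges} = s) ∧
      s ⊆ {e | e ∈ w.edges} := by
  classical
  subst hg
  have hodd {u : V} {c : G.Walk u u} (hc : c.IsCycle) (hcw : ∀ e ∈ c.edges, e ∈ w.edges) :
      {e | e ∈ c.edges} = ↑w.edges.oddCountFinset := by
    rw [← hc.edges_toFinset_eq_oddCountFinset hcw hlen, List.coe_toFinset]
  obtain ⟨u, c, hc, hcw⟩ := exists_isCycle_of_not_cycleFree hW.2
  refine ⟨_, ⟨⟨u, c, hc, rfl⟩, hcw⟩, ?_⟩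
  rintro s ⟨⟨u', c', hc', rfl⟩, hc'w⟩
  rw [hodd hc' hc'w, hodd hc hcw]

/-- In a bipartite graph of girth `g`, the edge-induced subgraph of a closed walk with
cycle of length at most `2g - 2` contains exactly one cycle. -/
theorem stmt4 {V : Type*} (G : SimpleGraph V) (U : Set V)
    (hbip : ∀ a b : V, G.Adj a b → (a ∈ U ↔ b ∉ U))
    (g : ℕ) (hg : G.girth = g)
    (v : V) (w : G.Walk v v) (hW : isCWWC w) (hlen : w.length ≤ 2 * g - 2) :
    ∃! s : Set (Sym2 V),
      (∃ (u : V) (c : G.Walk u u), c.IsCycle ∧ {e | e ∈ c.edges} = s) ∧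
      s ⊆ {e | e ∈ w.edges} :=
  stmt4_general G g hg v w hW hlen
end

section
/- Let G be a bipartite graph with girth g, and let W be a closed walk with cycle of length i with g+2 ≤ i ≤ 2g−2. Then W has at least one edge that appears exactly once in W. -/
open SimpleGraph

/-- In a bipartite graph of girth `g`, every closed walk with cycle of length `i`,
`g + 2 ≤ i ≤ 2g - 2`, has at least one edge appearing exactly once in the walk. -/
theorem stmt5 {V : Type*} [DecidableEq V] (G : SimpleGraph V) (U : Set V)
    (hbip : ∀ a b : V, G.Adj a b → (a ∈ U ↔ b ∉ U))
    (g : ℕ) (hg : G.girth = g)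
    (v : V) (w : G.Walk v v) (hW : isCWWC w)
    (hlen1 : g + 2 ≤ w.length) (hlen2 : w.length ≤ 2 * g - 2) :
    ∃ e ∈ w.edges, w.edges.count e = 1 := by
  by_contra hc
  push_neg at hc
  -- every edge of w appears at least twice
  have hcount : ∀ e ∈ w.edges, 2 ≤ w.edges.count e := by
    intro e he
    have h1 : 1 ≤ w.edges.count e := List.count_pos_iff.mpr he
    have := hc e he
    omega
  -- extract a cycle from the edge subgraph
  obtain ⟨a, p, hp⟩ : ∃ (a : V) (p : (SimpleGraph.fromEdgeSet {e | e ∈ w.edges}).Walk a a),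
      p.IsCycle := by
    have h := hW.2
    unfold cycleFree SimpleGraph.IsAcyclic at h
    push_neg at h
    exact h
  have hle : SimpleGraph.fromEdgeSet {e | e ∈ w.edges} ≤ G := by
    intro a b hab
    rw [fromEdgeSet_adj] at hab
    exact (G.mem_edgeSet).mp (w.edges_subset_edgeSet hab.1)
  -- map the cycle into G
  have hpc : (p.mapLe hle).IsCycle := hp.mapLe hle
  have hnacyc : ¬ G.IsAcyclic := fun h => h _ hpc
  have h3g : 3 ≤ g := hg ▸ three_le_girth hnacyc
  -- girth is at most the length of the cycle
  have hegirth : G.egirth ≤ ((p.mapLe hle).length : ℕ∞) :=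
    iInf_le_of_le a <| iInf_le_of_le (p.mapLe hle) <| iInf_le _ hpc
  have hgir : g ≤ (p.mapLe hle).length := by
    have := ENat.toNat_le_toNat hegirth (by simp)
    rw [← hg]
    simpa [SimpleGraph.girth] using this
  have hplen : (p.mapLe hle).length = p.length := SimpleGraph.Walk.length_map _ _
  -- edges of the cycle are edges of w
  have hsub : ∀ e ∈ p.edges, e ∈ w.edges := by
    intro e he
    have := p.edges_subset_edgeSet he
    rw [edgeSet_fromEdgeSet] at this
    exact this.1
  have hnodup : p.edges.Nodup := hp.edges_nodup
  -- counting
  have hsubF : p.edges.toFinset ⊆ w.edges.toFinset := by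
    intro e he
    rw [List.mem_toFinset] at he ⊢
    exact hsub e he
  have hcard1 : p.edges.toFinset.card = p.edges.length :=
    List.toFinset_card_of_nodup hnodup
  have hsum : ∑ e ∈ w.edges.toFinset, w.edges.count e = w.edges.length := by
    have h := Multiset.toFinset_sum_count_eq (↑w.edges : Multiset (Sym2 V))
    rw [Multiset.coe_card] at h
    rw [← h]
    apply Finset.sum_congr rfl
    intros
    exact (Multiset.coe_count (α := Sym2 V) _ _).symm
  have hbig : 2 * w.edges.toFinset.card ≤ w.edges.length := by
    rw [← hsum]
    calc 2 * w.edges.toFinset.card = ∑ _e ∈ w.edges.toFinset, 2 := by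
          rw [Finset.sum_const, smul_eq_mul, mul_comm]
      _ ≤ ∑ e ∈ w.edges.toFinset, w.edges.count e := by
          apply Finset.sum_le_sum
          intro e he
          exact hcount e (List.mem_toFinset.mp he)
  have hcardle : p.edges.toFinset.card ≤ w.edges.toFinset.card :=
    Finset.card_le_card hsubF
  have hpel : p.edges.length = p.length := p.length_edges
  have hwel : w.edges.length = w.length := w.length_edges
  omega
end

section
/- For a (d_v, d_c)-regular bipartite graph G with vertex set V, the number of i-cycles satisfies N_i = (Σ_j λ_j^i − Ω_i − Ψ_i)/(2i), where λ_1,…,λ_{|V|} are the eigenvalues of the adjacency matrix of G, Ω_i is the number of closed cycle-free walks of length i, and Ψ_i is the number of closed walks with cycle of length i. -/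
open SimpleGraph

/-- Number of closed cycle-free walks of length `k` (starting vertex and direction
distinguished). -/
noncomputable def cycleFreeWalkCount {V : Type*} (G : SimpleGraph V) (k : ℕ) : ℕ :=
  Nat.card (Σ v : V, {w : G.Walk v v // w.length = k ∧ cycleFree w})

/-- Number of closed walks with cycle of length `k`. -/
noncomputable def cwwcCount {V : Type*} (G : SimpleGraph V) (k : ℕ) : ℕ :=
  Nat.card (Σ v : V, {w : G.Walk v v // w.length = k ∧ isCWWC w})

/-- Number of cycles of length `i` counted as subgraphs. -/
noncomputable def cycleCount {V : Type*} (G : SimpleGraph V) (i : ℕ) : ℕ :=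
  Nat.card {s : Set (Sym2 V) //
    ∃ (u : V) (c : G.Walk u u), c.IsCycle ∧ c.length = i ∧ {e | e ∈ c.edges} = s}

/-!
The eigenvalue sum `∑ λⱼ^i` is the trace of `A^i`, which counts closed walks of length `i`.
Every closed walk is cycle-free, a walk with cycle, or an `i`-cycle, and these are exclusive
since a cycle is not cycle-free. An `i`-cycle, viewed as an edge set `s`, is traversed by exactly
`2i` closed walks: a closed walk that is a cycle is determined by its edge set and its first
dart, and rotating and possibly reversing a cycle makes it start with any prescribed dart on `s`.
-/

theorem Nat.card_subtype_and_add_card_subtype_and_not {α : Type*} (p q : α → Prop)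
    [Finite {x // p x}] :
    Nat.card {x // p x ∧ q x} + Nat.card {x // p x ∧ ¬ q x} = Nat.card {x // p x} :=
  Set.ncard_inter_add_ncard_sdiff_eq_ncard {x | p x} {x | q x} (Set.finite_coe_iff.1 ‹_›)

theorem Matrix.IsHermitian.trace_pow_eq_sum_eigenvalues_pow {𝕜 n : Type*} [RCLike 𝕜] [Fintype n]
    [DecidableEq n] {A : Matrix n n 𝕜} (hA : A.IsHermitian) (k : ℕ) :
    (A ^ k).trace = ∑ j, (hA.eigenvalues j : 𝕜) ^ k := by
  conv_lhs => rw [hA.spectral_theorem, ← map_pow, Unitary.conjStarAlgAut_apply, trace_mul_cycle,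
    Unitary.coe_star_mul_self, one_mul, diagonal_pow, trace_diagonal]
  simp

namespace SimpleGraph.Walk
variable {V : Type*} {G : SimpleGraph V}

theorem edgeSet_eq_of_edgeSet_cons_eq {u v w : V} {h h' : G.Adj u v} {p q : G.Walk v w}
    (hp : s(u, v) ∉ p.edges) (hq : s(u, v) ∉ q.edges)
    (he : (cons h p).edgeSet = (cons h' q).edgeSet) : p.edgeSet = q.edgeSet := by
  rw [edgeSet_cons, edgeSet_cons] at he
  rw [← Set.insert_sdiff_self_of_notMem (s := p.edgeSet) hp,
    ← Set.insert_sdiff_self_of_notMem (s := q.edgeSet) hq, he]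

theorem IsPath.eq_of_edgeSet_eq {u v : V} {p q : G.Walk u v} (hp : p.IsPath) (hq : q.IsPath)
    (he : p.edgeSet = q.edgeSet) : p = q := by
  induction p with
  | nil => exact (isPath_iff_nil.1 hq).eq_nil.symm
  | @cons u x v h p ih =>
    have hx : x = q.snd := hq.eq_snd_of_mem_edges (by simp [← mem_edgeSet, ← he])
    cases q with
    | nil => exact absurd hx h.ne'
    | cons h' q =>
      rw [snd_cons] at hx
      subst hx
      rw [cons_isPath_iff] at hp hq
      rw [ih hp.1 hq.1 (edgeSet_eq_of_edgeSet_cons_eq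
        (fun hmem => hp.2 (p.fst_mem_support_of_mem_edges hmem))
        (fun hmem => hq.2 (q.fst_mem_support_of_mem_edges hmem)) he)]

theorem IsCycle.eq_of_edgeSet_eq_of_snd_eq {u : V} {c c' : G.Walk u u} (hc : c.IsCycle)
    (hc' : c'.IsCycle) (he : c.edgeSet = c'.edgeSet) (hs : c.snd = c'.snd) : c = c' := by
  cases c with
  | nil => exact absurd hc not_isCycle_nil
  | cons h p =>
    cases c' with
    | nil => exact absurd hc' not_isCycle_nil
    | cons h' p' =>
      rw [snd_cons, snd_cons] at hs
      subst hs
      rw [cons_isCycle_iff] at hc hc'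
      rw [hc.1.eq_of_edgeSet_eq hc'.1 (edgeSet_eq_of_edgeSet_cons_eq hc.2 hc'.2 he)]

theorem IsCycle.eq_snd_or_eq_penultimate_of_mem_edges {u w : V} {c : G.Walk u u} (hc : c.IsCycle)
    (hmem : s(u, w) ∈ c.edges) : w = c.snd ∨ w = c.penultimate := by
  cases c with
  | nil => exact absurd hc not_isCycle_nil
  | cons h p =>
    rw [cons_isCycle_iff] at hc
    rw [edges_cons, List.mem_cons] at hmem
    rcases hmem with hmem | hmem
    · exact .inl (by simpa using Sym2.congr_right.1 hmem)
    · right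
      rw [penultimate_cons_of_not_nil _ _ fun hp => h.ne hp.eq.symm]
      exact hc.1.eq_penultimate_of_mem_edges hmem

theorem IsCycle.exists_isCycle_snd_eq [DecidableEq V] {u : V} {c : G.Walk u u} (hc : c.IsCycle)
    (d : G.Dart) (hd : d.edge ∈ c.edgeSet) :
    ∃ c' : G.Walk d.fst d.fst, c'.IsCycle ∧ c'.snd = d.snd ∧ c'.edgeSet = c.edgeSet ∧
      c'.length = c.length := by
  have hd' : s(d.fst, d.snd) ∈ c.edges := hd
  have hmem : d.fst ∈ c.support := c.fst_mem_support_of_mem_edges hd'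
  set r := c.rotate d.fst hmem
  have hr : r.IsCycle := hc.rotate hmem
  have hre : r.edgeSet = c.edgeSet := Set.ext fun e => (c.rotate_edges d.fst hmem).mem_iff
  rcases hr.eq_snd_or_eq_penultimate_of_mem_edges (hre ▸ hd' : s(d.fst, d.snd) ∈ r.edgeSet)
    with h | h
  · exact ⟨r, hr, h.symm, hre, length_rotate ..⟩
  · exact ⟨r.reverse, hr.reverse, by rw [snd_reverse, h], by rw [edgeSet_reverse, hre],
      by rw [length_reverse, length_rotate]⟩

theorem IsCycle.not_cycleFree {u : V} {c : G.Walk u u} (hc : c.IsCycle) : ¬ cycleFree c :=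
  fun hcf => hcf _ (hc.transfer fun e he => by
    rw [edgeSet_fromEdgeSet]
    exact ⟨he, G.not_isDiag_of_mem_edgeSet (c.edges_subset_edgeSet he)⟩)

end SimpleGraph.Walk

open Finset

namespace SimpleGraph

variable {V : Type*} (G : SimpleGraph V)

theorem cycleCount_eq_zero_of_lt_three {i : ℕ} (hi : i < 3) : cycleCount G i = 0 := by
  refine Nat.card_eq_zero.2 (.inl ⟨?_⟩)
  rintro ⟨s, u, c, hc, rfl, -⟩
  exact absurd hc.three_le_length (by omega)

instance finiteSubtypeWalkLengthAnd [DecidableEq V] [G.LocallyFinite] (u v : V) (n : ℕ)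
    (P : G.Walk u v → Prop) : Finite {p : G.Walk u v // p.length = n ∧ P p} :=
  Finite.of_injective (β := {p : G.Walk u v // p.length = n}) (fun p => ⟨p.1, p.2.1⟩)
    fun _ _ h => Subtype.ext (by simpa using congrArg Subtype.val h)

variable [Fintype V] [DecidableEq V] [DecidableRel G.Adj]

theorem trace_adjMatrix_pow (α : Type*) [Semiring α] (n : ℕ) :
    ((G.adjMatrix α) ^ n).trace = Nat.card (Σ v : V, {w : G.Walk v v // w.length = n}) := by
  rw [Nat.card_sigma, Nat.cast_sum]
  refine sum_congr rfl fun v _ => ?_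
  rw [Matrix.diag_apply, adjMatrix_pow_apply_eq_card_walk, Nat.card_eq_fintype_card]
  rfl

theorem card_filter_dart_edge_mem {s : Finset (Sym2 V)} (hs : (s : Set (Sym2 V)) ⊆ G.edgeSet) :
    #{d : G.Dart | d.edge ∈ s} = 2 * #s := by
  rw [card_eq_sum_card_fiberwise (f := Dart.edge) (t := s) fun d hd => by simpa using hd,
    sum_congr rfl fun e he => ?_, sum_const, smul_eq_mul, mul_comm]
  rw [filter_filter, filter_congr fun d _ => and_iff_right_of_imp fun h => h ▸ he,
    G.dart_edge_fiber_card e (hs he)]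

theorem Walk.IsTrail.card_dart_edge_mem_edgeSet {u v : V} {p : G.Walk u v} (hp : p.IsTrail) :
    Nat.card {d : G.Dart // d.edge ∈ p.edgeSet} = 2 * p.length := by
  classical
  have hmem : ∀ d : G.Dart, d.edge ∈ p.edgeSet ↔ d.edge ∈ p.edges.toFinset := by simp
  rw [Nat.card_eq_fintype_card, Fintype.card_subtype, filter_congr fun d _ => hmem d,
    card_filter_dart_edge_mem G
      (by rw [Walk.coe_edges_toFinset]; exact p.edges_subset_edgeSet),
    List.toFinset_card_of_nodup hp.edges_nodup, Walk.length_edges]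

theorem card_closedWalk_length_eq_add (u : V) (n : ℕ) :
    Nat.card {w : G.Walk u u // w.length = n} =
      Nat.card {w : G.Walk u u // w.length = n ∧ cycleFree w} +
        Nat.card {w : G.Walk u u // w.length = n ∧ isCWWC w} +
          Nat.card {w : G.Walk u u // w.length = n ∧ w.IsCycle} := by
  have hcyc : Nat.card {w : G.Walk u u // (w.length = n ∧ ¬ cycleFree w) ∧ w.IsCycle} =
      Nat.card {w : G.Walk u u // w.length = n ∧ w.IsCycle} :=
    Nat.card_congr <| Equiv.subtypeEquivRight fun w =>
      ⟨fun h => ⟨h.1.1, h.2⟩, fun h => ⟨⟨h.1, h.2.not_cycleFree⟩, h.2⟩⟩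
  have hcwwc : Nat.card {w : G.Walk u u // (w.length = n ∧ ¬ cycleFree w) ∧ ¬ w.IsCycle} =
      Nat.card {w : G.Walk u u // w.length = n ∧ isCWWC w} :=
    Nat.card_congr <| Equiv.subtypeEquivRight fun w => by unfold isCWWC; tauto
  rw [← Nat.card_subtype_and_add_card_subtype_and_not _ cycleFree,
    ← Nat.card_subtype_and_add_card_subtype_and_not (fun w => w.length = n ∧ ¬ cycleFree w)
      Walk.IsCycle, hcyc, hcwwc]
  ring

theorem card_closedWalks_eq_add (n : ℕ) :
    Nat.card (Σ v : V, {w : G.Walk v v // w.length = n}) =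
      cycleFreeWalkCount G n + cwwcCount G n +
        Nat.card (Σ v : V, {w : G.Walk v v // w.length = n ∧ w.IsCycle}) := by
  simp only [cycleFreeWalkCount, cwwcCount, Nat.card_sigma, ← sum_add_distrib,
    card_closedWalk_length_eq_add]

theorem Walk.IsCycle.card_isCycle_edgeSet_eq {u : V} {c : G.Walk u u} (hc : c.IsCycle) :
    Nat.card {x : Σ v : V, {w : G.Walk v v // w.length = c.length ∧ w.IsCycle} //
      x.2.1.edgeSet = c.edgeSet} = 2 * c.length := by
  rw [← hc.isTrail.card_dart_edge_mem_edgeSet]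
  refine Nat.card_congr (Equiv.ofBijective
    (fun x => ⟨x.1.2.1.firstDart x.1.2.2.2.not_nil,
      x.2.subset (x.1.2.1.mk_start_snd_mem_edges x.1.2.2.2.not_nil)⟩) ⟨?_, ?_⟩)
  · rintro ⟨⟨v, w, _, hw⟩, he⟩ ⟨⟨v', w', _, hw'⟩, he'⟩ h
    simp only [Subtype.mk.injEq, Dart.ext_iff, firstDart_toProd, Prod.mk.injEq] at h
    obtain ⟨rfl, hs⟩ := h
    obtain rfl := hw.eq_of_edgeSet_eq_of_snd_eq hw' (he.trans he'.symm) hs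
    rfl
  · rintro ⟨d, hd⟩
    obtain ⟨c', hc', hs, he, hl⟩ := hc.exists_isCycle_snd_eq d hd
    exact ⟨⟨⟨d.fst, c', hl, hc'⟩, he⟩, Subtype.ext (Dart.ext _ _ (Prod.ext rfl hs))⟩

theorem card_closedWalks_isCycle (i : ℕ) :
    Nat.card (Σ v : V, {w : G.Walk v v // w.length = i ∧ w.IsCycle}) = 2 * i * cycleCount G i := by
  let S := {s : Set (Sym2 V) //
    ∃ (u : V) (c : G.Walk u u), c.IsCycle ∧ c.length = i ∧ {e | e ∈ c.edges} = s}
  let F : (Σ v : V, {w : G.Walk v v // w.length = i ∧ w.IsCycle}) → S :=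
    fun x => ⟨x.2.1.edgeSet, x.1, x.2.1, x.2.2.2, x.2.2.1, rfl⟩
  have hfiber : ∀ s : S, Nat.card {x // F x = s} = 2 * i := by
    rintro ⟨s, u, c, hc, rfl, rfl⟩
    rw [← hc.card_isCycle_edgeSet_eq]
    exact Nat.card_congr (Equiv.subtypeEquivRight fun x => Subtype.ext_iff)
  have : Fintype S := Fintype.ofFinite S
  rw [← Nat.card_congr (Equiv.sigmaFiberEquiv F), Nat.card_sigma, sum_congr rfl fun s _ => hfiber s,
    sum_const, card_univ, smul_eq_mul, mul_comm, cycleCount, Nat.card_eq_fintype_card]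

end SimpleGraph

theorem stmt7_general {V : Type*} [Fintype V] [DecidableEq V] (G : SimpleGraph V)
    [DecidableRel G.Adj] (i : ℕ) (hA : (G.adjMatrix ℝ).IsHermitian) :
    (cycleCount G i : ℝ) =
      (∑ j : V, hA.eigenvalues j ^ i
        - (cycleFreeWalkCount G i : ℝ) - (cwwcCount G i : ℝ)) / (2 * i) := by
  have hwalks : ∑ j : V, hA.eigenvalues j ^ i =
      cycleFreeWalkCount G i + cwwcCount G i + 2 * i * (cycleCount G i : ℝ) := by
    have htrace : ((G.adjMatrix ℝ) ^ i).trace = ∑ j, hA.eigenvalues j ^ i := by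
      simpa using hA.trace_pow_eq_sum_eigenvalues_pow i
    rw [← htrace, trace_adjMatrix_pow, card_closedWalks_eq_add,
      card_closedWalks_isCycle]
    push_cast
    ring
  rcases Nat.eq_zero_or_pos i with rfl | hi
  · -- both sides vanish: `x / 0 = 0`, and there are no `0`-cycles
    simp [cycleCount_eq_zero_of_lt_three]
  · rw [hwalks]
    field_simp
    ring

/-- For a `(d_v, d_c)`-regular bipartite graph, the number of `i`-cycles equals
`(Σ_j λ_j^i − Ω_i − Ψ_i)/(2i)`. -/
theorem stmt7 {V : Type*} [Fintype V] [DecidableEq V] (G : SimpleGraph V)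
    [DecidableRel G.Adj] (U : Set V) [DecidablePred (· ∈ U)] (dv dc : ℕ)
    (hbip : ∀ a b : V, G.Adj a b → (a ∈ U ↔ b ∉ U))
    (hdv : ∀ v ∈ U, G.degree v = dv) (hdc : ∀ v : V, v ∉ U → G.degree v = dc)
    (i : ℕ) (hA : (G.adjMatrix ℝ).IsHermitian) :
    (cycleCount G i : ℝ) =
      (∑ j : V, hA.eigenvalues j ^ i
        - (cycleFreeWalkCount G i : ℝ) - (cwwcCount G i : ℝ)) / (2 * i) :=
  stmt7_general G i hA
end

section
/- In a (d_v, d_c)-regular bipartite graph with girth at least 8, the number of closed cycle-free walks of length 6 from a fixed variable node to itself equals d_v(d_v^2 + 2d_v(d_c−1) + (d_v−1)(d_c−1) + (d_c−1)^2). -/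
/-!
Since the girth exceeds 6, every closed walk of length 6 is cycle-free, so we count all of them:
with `A` the adjacency matrix and `N x = (A ^ 3) u x` the number of walks of length 3 from `u`
to `x`, their number is `(A ^ 6) u u = ∑ x, N x ^ 2`.

Two distinct paths whose lengths add up to less than the girth would close a cycle inside their
union, so they cannot exist. Hence `N x ≤ 1` when `x` is not a neighbour of `u`, and for a
neighbour `x` we get `N x = ∑ z ∼ x, (A ^ 2) u z = d_v + (d_c - 1)`, because `(A ^ 2) u u = d_v`
while `(A ^ 2) u z = 1` for the other neighbours `z` of `x` (no 4-cycles). Biregularity gives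
`∑ x, N x = d_v d_c d_v`, so the count is `d_v (d_v + d_c - 1)² + d_v (d_v - 1)(d_c - 1)`.
-/

open SimpleGraph

namespace SimpleGraph

variable {V : Type*} {G : SimpleGraph V}

theorem isAcyclic_fromEdgeSet_of_length_lt_egirth {l : List (Sym2 V)}
    (hl : ∀ e ∈ l, e ∈ G.edgeSet) (hlen : (l.length : ℕ∞) < G.egirth) :
    (fromEdgeSet {e | e ∈ l}).IsAcyclic := by
  intro v c hc
  have hle : fromEdgeSet {e | e ∈ l} ≤ G := (fromEdgeSet_le _).2 fun e he => hl e he.1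
  have hcl : c.length ≤ l.length := by
    rw [← c.length_edges]
    refine hc.edges_nodup.length_le_of_subset fun e he => ?_
    exact (edgeSet_fromEdgeSet _ ▸ c.edges_subset_edgeSet he).1
  have := egirth_le_length (hc.mapLe hle)
  rw [Walk.length_mapLe] at this
  exact absurd (this.trans (by exact_mod_cast hcl)) hlen.not_ge

theorem cycleFree_of_length_lt_egirth {u v : V} (w : G.Walk u v)
    (hw : (w.length : ℕ∞) < G.egirth) : cycleFree w :=
  isAcyclic_fromEdgeSet_of_length_lt_egirth (fun _ he => w.edges_subset_edgeSet he)
    (by rwa [w.length_edges])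

theorem Walk.IsPath.eq_of_length_add_length_lt_egirth {a b : V} {p q : G.Walk a b}
    (hp : p.IsPath) (hq : q.IsPath) (hpq : (p.length + q.length : ℕ∞) < G.egirth) : p = q := by
  have hl : ∀ e ∈ p.edges ++ q.edges, e ∈ G.edgeSet := fun _ he =>
    (List.mem_append.1 he).elim (p.edges_subset_edgeSet ·) (q.edges_subset_edgeSet ·)
  set H := fromEdgeSet {e | e ∈ p.edges ++ q.edges}
  have hacyc : H.IsAcyclic := isAcyclic_fromEdgeSet_of_length_lt_egirth hl (by simpa using hpq)
  have hH : ∀ e ∈ p.edges ++ q.edges, e ∈ H.edgeSet := fun e he => by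
    rw [edgeSet_fromEdgeSet]; exact ⟨he, G.not_isDiag_of_mem_edgeSet (hl e he)⟩
  have hpH := fun e he => hH e (List.mem_append_left q.edges he)
  have hqH := fun e he => hH e (List.mem_append_right p.edges he)
  have := congrArg (·.1.support)
    ((hacyc.subsingleton_path a b).elim ⟨_, hp.transfer hpH⟩ ⟨_, hq.transfer hqH⟩)
  exact Walk.ext_support (by simpa using this)

theorem Walk.isPath_of_length_eq_two {a b : V} (p : G.Walk a b) (hp : p.length = 2)
    (hab : a ≠ b) : p.IsPath := by
  rcases p with _ | ⟨hax, _ | ⟨hxb, _ | ⟨_, _⟩⟩⟩ <;> simp at hp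
  simp [Walk.cons_isPath_iff, hax.ne, hxb.ne, hab]

theorem Walk.isPath_of_length_eq_three {a b : V} (p : G.Walk a b) (hp : p.length = 3)
    (hab : a ≠ b) (hadj : ¬G.Adj a b) : p.IsPath := by
  rcases p with _ | ⟨hax, _ | ⟨hxy, _ | ⟨hyb, _ | ⟨_, _⟩⟩⟩⟩ <;> simp at hp
  simp [Walk.cons_isPath_iff, hax.ne, hxy.ne, hyb.ne, hab]
  exact ⟨by rintro rfl; exact hadj hax, by rintro rfl; exact hadj hyb⟩

theorem Walk.length_ne_three_of_three_lt_egirth (hg : 3 < G.egirth) {a : V} (p : G.Walk a a) :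
    p.length ≠ 3 := by
  intro hp
  rcases p with _ | ⟨hax, _ | ⟨hxy, _ | ⟨hya, _ | ⟨_, _⟩⟩⟩⟩ <;> simp at hp
  have hcyc : (Walk.cons hax (.cons hxy (.cons hya .nil))).IsCycle := by
    rw [Walk.cons_isCycle_iff]
    refine ⟨Walk.isPath_of_length_eq_two _ rfl hax.ne.symm, ?_⟩
    simp [hax.ne, hxy.ne, hya.ne.symm]
  exact absurd (egirth_le_length hcyc) (by simpa using hg)

variable [Fintype V] [DecidableEq V] [DecidableRel G.Adj]

theorem adjMatrix_pow_two_apply_eq_one (hg : 4 < G.egirth) {u x z : V} (hux : G.Adj u x)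
    (hxz : G.Adj x z) (huz : u ≠ z) : (G.adjMatrix ℕ ^ 2) u z = 1 := by
  rw [adjMatrix_pow_apply_eq_card_walk, Nat.cast_id, Fintype.card_eq_one_iff]
  refine ⟨⟨.cons hux (.cons hxz .nil), rfl⟩, fun ⟨q, hq⟩ => Subtype.ext ?_⟩
  refine (q.isPath_of_length_eq_two hq huz).eq_of_length_add_length_lt_egirth
    (Walk.isPath_of_length_eq_two _ rfl huz) ?_
  convert hg using 1
  simp [show q.length = 2 from hq]; norm_num

theorem adjMatrix_pow_three_apply_le_one (hg : 6 < G.egirth) {u x : V} (hux : ¬G.Adj u x) :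
    (G.adjMatrix ℕ ^ 3) u x ≤ 1 := by
  rw [adjMatrix_pow_apply_eq_card_walk, Nat.cast_id, Fintype.card_le_one_iff]
  rintro ⟨p, hp⟩ ⟨q, hq⟩
  obtain rfl | hne := eq_or_ne u x
  · exact absurd hp (p.length_ne_three_of_three_lt_egirth (lt_of_le_of_lt (by norm_num) hg))
  refine Subtype.ext ((p.isPath_of_length_eq_three hp hne hux).eq_of_length_add_length_lt_egirth
    (q.isPath_of_length_eq_three hq hne hux) ?_)
  convert hg using 1
  simp [show p.length = 3 from hp, show q.length = 3 from hq]; norm_num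

theorem adjMatrix_pow_three_apply_of_adj (hg : 4 < G.egirth) {u x : V} (hux : G.Adj u x) :
    (G.adjMatrix ℕ ^ 3) u x = G.degree u + (G.degree x - 1) := by
  have hxu := (mem_neighborFinset _ _ _).2 hux.symm
  rw [pow_succ, mul_adjMatrix_apply, ← Finset.add_sum_erase _ _ hxu,
    Finset.sum_congr rfl fun z hz => adjMatrix_pow_two_apply_eq_one hg hux
      ((mem_neighborFinset _ _ _).1 (Finset.mem_of_mem_erase hz)) (Finset.ne_of_mem_erase hz).symm,
    sq, adjMatrix_mul_self_apply_self, Nat.cast_id, Finset.sum_const, Finset.card_erase_of_mem hxu,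
    card_neighborFinset_eq_degree, smul_eq_mul, mul_one]

theorem adjMatrix_pow_six_apply_self (u : V) :
    (G.adjMatrix ℕ ^ 6) u u = ∑ x, (G.adjMatrix ℕ ^ 3) u x ^ 2 := by
  rw [show 6 = 3 + 3 from rfl, pow_add, Matrix.mul_apply]
  refine Finset.sum_congr rfl fun x _ => ?_
  rw [sq, ((isSymm_adjMatrix G).pow 3).apply x u]

theorem sum_adjMatrix_pow_three_apply (u : V) :
    ∑ x, (G.adjMatrix ℕ ^ 3) u x =
      ∑ y ∈ G.neighborFinset u, ∑ z ∈ G.neighborFinset y, G.degree z := by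
  have hrow (M : Matrix V V ℕ) : ∑ x, M u x = Matrix.mulVec M (Function.const V 1) u := by
    simp [Matrix.mulVec, dotProduct]
  rw [hrow, pow_three, ← Matrix.mulVec_mulVec, ← Matrix.mulVec_mulVec, adjMatrix_mulVec_apply]
  simp [adjMatrix_mulVec_apply]

theorem sum_adjMatrix_pow_three_apply_of_biregular {U : Set V} {dv dc : ℕ}
    (hbip : ∀ a b : V, G.Adj a b → (a ∈ U ↔ b ∉ U))
    (hdv : ∀ v ∈ U, G.degree v = dv) (hdc : ∀ v : V, v ∉ U → G.degree v = dc)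
    {u : V} (hu : u ∈ U) : ∑ x, (G.adjMatrix ℕ ^ 3) u x = dv * (dc * dv) := by
  have hU : ∀ y ∈ G.neighborFinset u, y ∉ U := fun y hy =>
    (hbip u y ((mem_neighborFinset _ _ _).1 hy)).1 hu
  have hU' : ∀ y ∈ G.neighborFinset u, ∀ z ∈ G.neighborFinset y, z ∈ U := fun y hy z hz =>
    not_not.1 fun hz' => hU y hy ((hbip y z ((mem_neighborFinset _ _ _).1 hz)).2 hz')
  rw [sum_adjMatrix_pow_three_apply, Finset.sum_const_nat (m := dc * dv) fun y hy => ?_,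
    card_neighborFinset_eq_degree, hdv u hu]
  rw [Finset.sum_const_nat (m := dv) fun z hz => hdv z (hU' y hy z hz),
    card_neighborFinset_eq_degree, hdc y (hU y hy)]

end SimpleGraph

theorem mul_add_sq_add_eq_of_mul_add_add_eq {dv dc S : ℕ}
    (h : dv * (dv + (dc - 1)) + S = dv * (dc * dv)) :
    dv * (dv + (dc - 1)) ^ 2 + S =
      dv * (dv ^ 2 + 2 * dv * (dc - 1) + (dv - 1) * (dc - 1) + (dc - 1) ^ 2) := by
  rcases dv with _ | v
  · simpa using h
  rcases dc with _ | c
  · nlinarith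
  simp only [Nat.add_sub_cancel] at h ⊢
  nlinarith

theorem stmt10_general {V : Type*} [Fintype V] [DecidableEq V] (G : SimpleGraph V)
    [DecidableRel G.Adj] (U : Set V) (dv dc : ℕ)
    (hbip : ∀ a b : V, G.Adj a b → (a ∈ U ↔ b ∉ U))
    (hdv : ∀ v ∈ U, G.degree v = dv) (hdc : ∀ v : V, v ∉ U → G.degree v = dc)
    (hg : (8 : ℕ∞) ≤ G.girth) (u : V) (hu : u ∈ U) :
    Nat.card {w : G.Walk u u // w.length = 6 ∧ cycleFree w} =
      dv * (dv ^ 2 + 2 * dv * (dc - 1) + (dv - 1) * (dc - 1) + (dc - 1) ^ 2) := by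
  have hg6 : (6 : ℕ∞) < G.egirth :=
    lt_of_lt_of_le (by norm_num) (hg.trans G.egirth.natCast_toNat_le_self)
  have hg4 : (4 : ℕ∞) < G.egirth := lt_trans (by norm_num) hg6
  have hcount : Nat.card {w : G.Walk u u // w.length = 6 ∧ cycleFree w} =
      ∑ x, (G.adjMatrix ℕ ^ 3) u x ^ 2 := by
    rw [← adjMatrix_pow_six_apply_self, adjMatrix_pow_apply_eq_card_walk, Nat.cast_id,
      ← Nat.card_eq_fintype_card]
    exact Nat.card_congr (Equiv.subtypeEquivRight fun w => and_iff_left_of_imp fun hw =>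
      cycleFree_of_length_lt_egirth w (by rwa [hw]))
  have hnear : ∀ x ∈ G.neighborFinset u, (G.adjMatrix ℕ ^ 3) u x = dv + (dc - 1) := by
    intro x hx
    have hux := (mem_neighborFinset _ _ _).1 hx
    rw [adjMatrix_pow_three_apply_of_adj hg4 hux, hdv u hu, hdc x ((hbip u x hux).1 hu)]
  have hfar : ∀ x ∉ G.neighborFinset u,
      (G.adjMatrix ℕ ^ 3) u x ^ 2 = (G.adjMatrix ℕ ^ 3) u x := by
    intro x hx
    have := adjMatrix_pow_three_apply_le_one hg6 (mt (mem_neighborFinset _ _ _).2 hx)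
    interval_cases (G.adjMatrix ℕ ^ 3) u x <;> rfl
  have htotal := sum_adjMatrix_pow_three_apply_of_biregular hbip hdv hdc hu
  rw [← Finset.sum_add_sum_compl (G.neighborFinset u), Finset.sum_congr rfl hnear,
    Finset.sum_const, card_neighborFinset_eq_degree, hdv u hu, smul_eq_mul] at htotal
  rw [hcount, ← Finset.sum_add_sum_compl (G.neighborFinset u),
    Finset.sum_congr rfl fun x hx => by rw [hnear x hx], Finset.sum_const,
    card_neighborFinset_eq_degree, hdv u hu, smul_eq_mul,
    Finset.sum_congr rfl fun x hx => hfar x (Finset.mem_compl.1 hx)]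
  exact mul_add_sq_add_eq_of_mul_add_add_eq htotal

/-- In a `(d_v, d_c)`-regular bipartite graph of girth at least 8, the number of
closed cycle-free walks of length 6 from a fixed variable node to itself equals
`d_v(d_v² + 2d_v(d_c−1) + (d_v−1)(d_c−1) + (d_c−1)²)`. -/
theorem stmt10 {V : Type*} [Fintype V] [DecidableEq V] (G : SimpleGraph V)
    [DecidableRel G.Adj] (U : Set V) [DecidablePred (· ∈ U)] (dv dc : ℕ)
    (hbip : ∀ a b : V, G.Adj a b → (a ∈ U ↔ b ∉ U))
    (hdv : ∀ v ∈ U, G.degree v = dv) (hdc : ∀ v : V, v ∉ U → G.degree v = dc)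
    (hg : (8 : ℕ∞) ≤ G.girth) (u : V) (hu : u ∈ U) :
    Nat.card {w : G.Walk u u // w.length = 6 ∧ cycleFree w} =
      dv * (dv ^ 2 + 2 * dv * (dc - 1) + (dv - 1) * (dc - 1) + (dc - 1) ^ 2) :=
  stmt10_general G U dv dc hbip hdv hdc hg u hu
end
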